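/- arXiv:2109.06779 — 2 statements merged into one kernel-verified Lean document; each statement's English description precedes it below -/
import Mathlib

section
/- The autonomous domination number of the path P_n on n vertices is n − 2, for all n ≥ 4. -/
open SimpleGraph

variable {V : Type*} [DecidableEq V]

/-- `S` is a dominating set of `G`. -/
def Dominates (G : SimpleGraph V) (S : Finset V) : Prop :=
  ∀ v : V, v ∈ S ∨ ∃ u ∈ S, G.Adj u v

/-- Dominating sets `S` and `S'` are adjacent: they differ by moving one
guard along an edge of `G`. -/
def AdjacentSets (G : SimpleGraph V) (S S' : Finset V) : Prop :=
  ∃ v v', v ∈ S ∧ v' ∉ S ∧ G.Adj v v' ∧ S' = insert v' (S.erase v)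

/-- `S` is a secure dominating set. -/
def SecureDominating (G : SimpleGraph V) (S : Finset V) : Prop :=
  Dominates G S ∧ ∀ v ∉ S, ∃ S', Dominates G S' ∧ AdjacentSets G S S' ∧ v ∈ S'

/-- An autonomously dominating family. -/
def AutFamily (G : SimpleGraph V) (F : Set (Finset V)) : Prop :=
  (∀ S ∈ F, Dominates G S) ∧
  (∀ S ∈ F, ∀ v ∉ S, ∃ S' ∈ F, AdjacentSets G S S' ∧ v ∈ S') ∧
  (∀ S ∈ F, ∀ S', Dominates G S' → AdjacentSets G S S' → S' ∈ F)

/-- An autonomously dominating set. -/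
def AutDomSet (G : SimpleGraph V) (S : Finset V) : Prop :=
  ∃ F, AutFamily G F ∧ S ∈ F

/-- The autonomous domination number. -/
noncomputable def autDomNum (G : SimpleGraph V) : ℕ :=
  sInf {k | ∃ S : Finset V, AutDomSet G S ∧ S.card = k}

/-- An eternally dominating family (no closure condition). -/
def EternalFamily (G : SimpleGraph V) (F : Set (Finset V)) : Prop :=
  (∀ S ∈ F, Dominates G S) ∧
  (∀ S ∈ F, ∀ v ∉ S, ∃ S' ∈ F, AdjacentSets G S S' ∧ v ∈ S')

/-- The eternal domination number. -/
noncomputable def eternalDomNum (G : SimpleGraph V) : ℕ :=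
  sInf {k | ∃ (F : Set (Finset V)) (S : Finset V),
    EternalFamily G F ∧ S ∈ F ∧ S.card = k}

/-- The domination number. -/
noncomputable def domNum (G : SimpleGraph V) : ℕ :=
  sInf {k | ∃ S : Finset V, Dominates G S ∧ S.card = k}

/-!
A dominating set of `P_n` with exactly two vacancies `{v, w}` is one where neither vacancy is an
end vertex whose only neighbour is the other vacancy. When `v` is attacked, the guard on the
neighbour of `v` facing away from `w` (the only neighbour, if `v` is an end vertex) moves in, and
the new vacancy pair is again of this kind; so the dominating `(n - 2)`-sets form an autonomously
dominating family.

Conversely, take a member `S` of an autonomously dominating family whose guard positions have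
minimal sum among the members of its size. Closure under dominating moves forbids every
dominating move of a guard to a lower vertex. In particular an attack on a vacancy `v` is answered
from `v - 1`, so every vacancy has a guard just below it; then moving the guard from `v + 1` down
to `v` keeps the set dominating unless `v` is `n - 1` or `n - 3`. So `S` has at most two
vacancies.
-/

theorem Finset.card_insert_erase {α : Type*} [DecidableEq α] {S : Finset α} {a b : α}
    (ha : a ∈ S) (hb : b ∉ S) : (insert b (S.erase a)).card = S.card := by
  rw [Finset.card_insert_of_notMem (fun h => hb (Finset.mem_of_mem_erase h)),
    Finset.card_erase_add_one ha]

theorem Finset.sum_insert_erase_add {α M : Type*} [DecidableEq α] [AddCommMonoid M]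
    (f : α → M) {S : Finset α} {a b : α} (ha : a ∈ S) (hb : b ∉ S) :
    ∑ i ∈ insert b (S.erase a), f i + f a = ∑ i ∈ S, f i + f b := by
  rw [Finset.sum_insert (fun h => hb (Finset.mem_of_mem_erase h)), add_assoc,
    Finset.sum_erase_add _ _ ha, add_comm]

section General

variable {G : SimpleGraph V}

theorem AdjacentSets.card_eq {S S' : Finset V} (h : AdjacentSets G S S') : S'.card = S.card := by
  obtain ⟨v, v', hv, hv', -, rfl⟩ := h
  exact Finset.card_insert_erase hv hv'

theorem autFamily_setOf_dominates_card {k : ℕ}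
    (h : ∀ S, Dominates G S → S.card = k → SecureDominating G S) :
    AutFamily G {S | Dominates G S ∧ S.card = k} := by
  refine ⟨fun S hS => hS.1, fun S hS v hv => ?_, fun S hS S' hS' hSS' => ⟨hS', ?_⟩⟩
  · obtain ⟨S', hS'dom, hSS', hvS'⟩ := (h S hS.1 hS.2).2 v hv
    exact ⟨S', ⟨hS'dom, hSS'.card_eq.trans hS.2⟩, hSS', hvS'⟩
  · exact hSS'.card_eq.trans hS.2

theorem dominates_compl_iff [Fintype V] {A : Finset V} :
    Dominates G Aᶜ ↔ ∀ a ∈ A, ∃ c ∉ A, G.Adj c a := by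
  simp only [Dominates, Finset.mem_compl]
  refine ⟨fun h a ha => ?_, fun h v => ?_⟩
  · exact (h a).resolve_left (not_not.2 ha)
  · by_cases hv : v ∈ A
    · exact Or.inr (h v hv)
    · exact Or.inl hv

end General

section Path

variable {n : ℕ}

theorem pathGraph_exists_adj_iff {x : Fin n} {P : Fin n → Prop} :
    (∃ c, P c ∧ (pathGraph n).Adj c x) ↔
      (∃ h : 0 < (x : ℕ), P ⟨x - 1, by omega⟩) ∨ (∃ h : (x : ℕ) + 1 < n, P ⟨x + 1, h⟩) := by
  constructor
  · rintro ⟨c, hP, hc⟩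
    rw [pathGraph_adj] at hc
    rcases hc with hc | hc
    · exact Or.inl ⟨by omega, by convert hP; omega⟩
    · exact Or.inr ⟨by omega, by convert hP⟩
  · rintro (⟨h, hP⟩ | ⟨h, hP⟩)
    · exact ⟨_, hP, pathGraph_adj.2 (Or.inl (Nat.sub_add_cancel h))⟩
    · exact ⟨_, hP, pathGraph_adj.2 (Or.inr rfl)⟩

theorem pathGraph_dominates_compl_pair_iff {a b : Fin n} (hab : a ≠ b) :
    Dominates (pathGraph n) {a, b}ᶜ ↔
      ¬((a : ℕ) ≤ 1 ∧ (b : ℕ) ≤ 1) ∧ ¬(n ≤ (a : ℕ) + 2 ∧ n ≤ (b : ℕ) + 2) := by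
  rw [← Fin.val_ne_iff] at hab
  simp only [dominates_compl_iff, Finset.mem_insert, Finset.mem_singleton, forall_eq_or_imp,
    forall_eq, pathGraph_exists_adj_iff, not_or]
  simp only [Fin.ext_iff, exists_prop]
  omega

theorem pathGraph_secureDominating_of_card (hn : 4 ≤ n) {S : Finset (Fin n)}
    (hS : Dominates (pathGraph n) S) (hcard : S.card = n - 2) :
    SecureDominating (pathGraph n) S := by
  refine ⟨hS, fun v hv => ?_⟩
  obtain ⟨w, hvw, rfl⟩ : ∃ w, v ≠ w ∧ S = {v, w}ᶜ := by
    have hcompl : Sᶜ.card = 2 := by rw [Finset.card_compl, Fintype.card_fin]; omega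
    obtain ⟨x, y, hxy, hSxy⟩ := Finset.card_eq_two.1 hcompl
    have hvxy : v ∈ ({x, y} : Finset _) := hSxy ▸ Finset.mem_compl.2 hv
    rw [Finset.mem_insert, Finset.mem_singleton] at hvxy
    rcases hvxy with rfl | rfl
    · exact ⟨y, hxy, by rw [← hSxy, compl_compl]⟩
    · exact ⟨x, hxy.symm, by rw [Finset.pair_comm, ← hSxy, compl_compl]⟩
  rw [pathGraph_dominates_compl_pair_iff hvw] at hS
  -- the guard comes from the side of `v` facing away from `w`
  obtain ⟨x, ⟨hxw, hsafe⟩, hxv⟩ : ∃ x, (x ≠ w ∧ ¬((w : ℕ) ≤ 1 ∧ (x : ℕ) ≤ 1) ∧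
      ¬(n ≤ (w : ℕ) + 2 ∧ n ≤ (x : ℕ) + 2)) ∧ (pathGraph n).Adj x v := by
    rw [pathGraph_exists_adj_iff]
    simp only [ne_eq, Fin.ext_iff, exists_prop]
    omega
  refine ⟨{w, x}ᶜ, (pathGraph_dominates_compl_pair_iff hxw.symm).2 hsafe,
    ⟨x, v, by simp [hxw, hxv.ne], hv, hxv, ?_⟩, by simp [hvw, hxv.ne']⟩
  ext u
  simp only [Finset.mem_compl, Finset.mem_insert, Finset.mem_singleton, Finset.mem_erase]
  have hvx := hxv.ne'
  rcases eq_or_ne u v with rfl | huv <;> tauto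

theorem pathGraph_exists_autDomSet_card (hn : 4 ≤ n) :
    ∃ S : Finset (Fin n), AutDomSet (pathGraph n) S ∧ S.card = n - 2 := by
  have h02 : (⟨0, by omega⟩ : Fin n) ≠ ⟨2, by omega⟩ := by simp
  have hdom : Dominates (pathGraph n) {⟨0, by omega⟩, ⟨2, by omega⟩}ᶜ :=
    (pathGraph_dominates_compl_pair_iff h02).2 (by simp only; omega)
  have hcard : ({⟨0, by omega⟩, ⟨2, by omega⟩}ᶜ : Finset (Fin n)).card = n - 2 := by
    rw [Finset.card_compl, Fintype.card_fin, Finset.card_pair h02]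
  exact ⟨_, ⟨_, autFamily_setOf_dominates_card
    (fun S hS hS' => pathGraph_secureDominating_of_card hn hS hS'), hdom, hcard⟩, hcard⟩

section LowerBound

variable {F : Set (Finset (Fin n))} {S : Finset (Fin n)}

theorem mem_of_forall_exists_pred_mem (hS : ∀ u ∉ S, ∃ c ∈ S, (c : ℕ) + 1 = u) {v w : Fin n}
    (hv : v ∉ S) (hw : (w : ℕ) = v + 1) : w ∈ S := by
  by_contra hwS
  obtain ⟨c, hc, hcw⟩ := hS w hwS
  obtain rfl : c = v := Fin.ext (by omega)
  exact hv hc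

theorem pathGraph_dominates_insert_erase (hS : ∀ u ∉ S, ∃ c ∈ S, (c : ℕ) + 1 = u)
    {v c : Fin n} (hc : (c : ℕ) = v + 1) (hv3 : (v : ℕ) + 3 ≠ n) :
    Dominates (pathGraph n) (insert v (S.erase c)) := by
  intro u
  by_cases huT : u ∈ insert v (S.erase c)
  · exact Or.inl huT
  refine Or.inr ?_
  by_cases huc : u = c
  · exact ⟨v, Finset.mem_insert_self _ _, pathGraph_adj.2 (Or.inl (huc ▸ hc.symm))⟩
  have huS : u ∉ S := fun h => huT (Finset.mem_insert_of_mem (Finset.mem_erase.2 ⟨huc, h⟩))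
  obtain ⟨d, hdS, hdu⟩ := hS u huS
  by_cases hdc : d = c
  · -- `u = v + 2` has lost its guard below, but then `u + 1` is guarded
    subst hdc
    have hu1 : (u : ℕ) + 1 < n := by have := u.isLt; omega
    have he : (⟨u + 1, hu1⟩ : Fin n) ∈ S := mem_of_forall_exists_pred_mem hS huS rfl
    refine ⟨_, Finset.mem_insert_of_mem (Finset.mem_erase.2 ⟨?_, he⟩),
      pathGraph_adj.2 (Or.inr rfl)⟩
    simp only [Ne, Fin.ext_iff]
    omega
  · exact ⟨d, Finset.mem_insert_of_mem (Finset.mem_erase.2 ⟨hdc, hdS⟩),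
      pathGraph_adj.2 (Or.inl hdu)⟩

theorem AutFamily.exists_add_one_eq_of_notMem (hF : AutFamily (pathGraph n) F) (hS : S ∈ F)
    (hdown : ∀ a ∈ S, ∀ b ∉ S, (b : ℕ) < a → insert b (S.erase a) ∉ F)
    {v : Fin n} (hv : v ∉ S) : ∃ c ∈ S, (c : ℕ) + 1 = v := by
  obtain ⟨T, hTF, ⟨a, b, ha, hb, hab, rfl⟩, hvT⟩ := hF.2.1 S hS v hv
  obtain rfl : v = b := by
    rcases Finset.mem_insert.1 hvT with h | h
    · exact h
    · exact absurd (Finset.mem_of_mem_erase h) hv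
  exact ⟨a, ha, (pathGraph_adj.1 hab).resolve_right fun hva => hdown a ha v hv (by omega) hTF⟩

theorem AutFamily.add_one_eq_or_add_three_eq_of_notMem (hF : AutFamily (pathGraph n) F) (hS : S ∈ F)
    (hdown : ∀ a ∈ S, ∀ b ∉ S, (b : ℕ) < a → insert b (S.erase a) ∉ F)
    {v : Fin n} (hv : v ∉ S) : (v : ℕ) + 1 = n ∨ (v : ℕ) + 3 = n := by
  by_contra! hv'
  have hpred := fun u hu => hF.exists_add_one_eq_of_notMem hS hdown (v := u) hu
  have hv1 : (v : ℕ) + 1 < n := by have := v.isLt; omega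
  have hc : (⟨v + 1, hv1⟩ : Fin n) ∈ S := mem_of_forall_exists_pred_mem hpred hv rfl
  refine hdown _ hc v hv (Nat.lt_succ_self _) (hF.2.2 S hS _
    (pathGraph_dominates_insert_erase hpred rfl hv'.2) ⟨_, v, hc, hv, ?_, rfl⟩)
  exact pathGraph_adj.2 (Or.inr rfl)

theorem sub_two_le_card_of_forall_notMem
    (h : ∀ v ∉ S, (v : ℕ) + 1 = n ∨ (v : ℕ) + 3 = n) : n - 2 ≤ S.card := by
  have hcompl : Sᶜ.card ≤ 2 :=
    calc Sᶜ.card ≤ ({n - 1, n - 3} : Finset ℕ).card :=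
          Finset.card_le_card_of_injOn (fun v : Fin n => (v : ℕ))
            (fun v hv => by have := h v (Finset.mem_compl.1 hv); simp; omega)
            Fin.val_injective.injOn
      _ ≤ 2 := Finset.card_le_two
  rw [Finset.card_compl, Fintype.card_fin] at hcompl
  omega

theorem AutFamily.sub_two_le_card (hF : AutFamily (pathGraph n) F) (hS : S ∈ F) :
    n - 2 ≤ S.card := by
  classical
  obtain ⟨T, hT, hTmin⟩ := Finset.exists_min_image {T | T ∈ F ∧ T.card = S.card}
    (fun T : Finset (Fin n) => ∑ i ∈ T, (i : ℕ)) ⟨S, by simp [hS]⟩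
  simp only [Finset.mem_filter, Finset.mem_univ, true_and] at hT hTmin
  have hdown : ∀ a ∈ T, ∀ b ∉ T, (b : ℕ) < a → insert b (T.erase a) ∉ F := by
    intro a ha b hb hba hF'
    have := hTmin _ ⟨hF', (Finset.card_insert_erase ha hb).trans hT.2⟩
    have := Finset.sum_insert_erase_add (fun i : Fin n => (i : ℕ)) ha hb
    omega
  rw [← hT.2]
  exact sub_two_le_card_of_forall_notMem fun v hv =>
    hF.add_one_eq_or_add_three_eq_of_notMem hT.1 hdown hv

end LowerBound

end Path

/-- the autonomous domination number of the path `P_n` is `n - 2`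
for `n ≥ 4`. -/
theorem autDomNum_pathGraph (n : ℕ) (hn : 4 ≤ n) :
    autDomNum (SimpleGraph.pathGraph n) = n - 2 := by
  obtain ⟨S, hS, hcard⟩ := pathGraph_exists_autDomSet_card hn
  refine le_antisymm (Nat.sInf_le ⟨S, hS, hcard⟩) (le_csInf ⟨_, S, hS, hcard⟩ ?_)
  rintro k ⟨T, ⟨F, hF, hT⟩, rfl⟩
  exact hF.sub_two_le_card hT
end

section
/- Adding an edge to a graph can strictly increase the autonomous domination number: there exists a graph G and an edge e not in G such that γ_aut(G + e) > γ_aut(G). Specifically, the graph on six vertices consisting of two triangles {a_1,a_2,a_3} and {b_1,b_2,b_3} joined by edges (a_i,b_i) for i = 1,2,3 has autonomous domination number 2, while the graph obtained by adding the edge (a_1,b_2) has autonomous domination number 3. -/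
set_option maxRecDepth 4000


open SimpleGraph

variable {V : Type*} [DecidableEq V]

/-- The triangular prism: two triangles `{0,1,2}` and `{3,4,5}` joined by the
edges `(0,3), (1,4), (2,5)`. -/
def prismGraph : SimpleGraph (Fin 6) :=
  SimpleGraph.fromRel (fun x y => (x, y) ∈
    ([(0,1), (0,2), (1,2), (3,4), (3,5), (4,5), (0,3), (1,4), (2,5)] :
      List (Fin 6 × Fin 6)))

/-- The triangular prism together with the additional diagonal edge `(0,4)`,
i.e. `(a_1, b_2)`. -/
def prismGraphPlus : SimpleGraph (Fin 6) :=
  SimpleGraph.fromRel (fun x y => (x, y) ∈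
    ([(0,1), (0,2), (1,2), (3,4), (3,5), (4,5), (0,3), (1,4), (2,5), (0,4)] :
      List (Fin 6 × Fin 6)))

/- ### Auxiliary material -/

instance : DecidableRel prismGraph.Adj := fun a b =>
  decidable_of_iff _ (SimpleGraph.fromRel_adj _ a b).symm

instance : DecidableRel prismGraphPlus.Adj := fun a b =>
  decidable_of_iff _ (SimpleGraph.fromRel_adj _ a b).symm

instance {V : Type*} [DecidableEq V] [Fintype V] (G : SimpleGraph V) [DecidableRel G.Adj]
    (S : Finset V) : Decidable (Dominates G S) := by
  unfold Dominates; infer_instance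

instance {V : Type*} [DecidableEq V] [Fintype V] (G : SimpleGraph V) [DecidableRel G.Adj]
    (S S' : Finset V) : Decidable (AdjacentSets G S S') := by
  unfold AdjacentSets; infer_instance

lemma card_of_adjacentSets {G : SimpleGraph V} {S S' : Finset V}
    (h : AdjacentSets G S S') : S'.card = S.card := by
  obtain ⟨v, v', hv, hv', _, rfl⟩ := h
  have hv'e : v' ∉ S.erase v := fun h => hv' (Finset.mem_of_mem_erase h)
  rw [Finset.card_insert_of_notMem hv'e, Finset.card_erase_add_one hv]

/-- The family of all nine "cross" pairs in the prism. -/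
def prismFam : Finset (Finset (Fin 6)) :=
  {{0,3},{0,4},{0,5},{1,3},{1,4},{1,5},{2,3},{2,4},{2,5}}

lemma prismFam_autFamily : AutFamily prismGraph ↑prismFam := by
  refine ⟨?_, ?_, ?_⟩
  · intro S hS
    have h : ∀ T ∈ prismFam, Dominates prismGraph T := by decide
    exact h S (by simpa using hS)
  · intro S hS v hv
    have h : ∀ T ∈ prismFam, ∀ v ∉ T,
        ∃ T' ∈ prismFam, AdjacentSets prismGraph T T' ∧ v ∈ T' := by decide
    obtain ⟨T', hT', h1, h2⟩ := h S (by simpa using hS) v hv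
    exact ⟨T', by simpa using hT', h1, h2⟩
  · intro S hS S' hdom hadj
    have h : ∀ T ∈ prismFam, ∀ T' : Finset (Fin 6),
        Dominates prismGraph T' → AdjacentSets prismGraph T T' → T' ∈ prismFam := by decide
    simpa using h S (by simpa using hS) S' hdom hadj

/-- All three-element subsets form an autonomous family for the augmented prism. -/
lemma plusFam_autFamily :
    AutFamily prismGraphPlus {S : Finset (Fin 6) | S.card = 3} := by
  have hdom3 : ∀ T : Finset (Fin 6), T.card = 3 → Dominates prismGraphPlus T := by decide
  refine ⟨fun S hS => hdom3 S hS, ?_, ?_⟩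
  · intro S hS v hv
    obtain hv' | ⟨u, hu, hadj⟩ := hdom3 S hS v
    · exact absurd hv' hv
    · refine ⟨insert v (S.erase u), ?_, ⟨u, v, hu, hv, hadj, rfl⟩, Finset.mem_insert_self _ _⟩
      have : AdjacentSets prismGraphPlus S (insert v (S.erase u)) :=
        ⟨u, v, hu, hv, hadj, rfl⟩
      simpa [Set.mem_setOf_eq, card_of_adjacentSets this] using hS
  · intro S hS S' _ hadj
    simpa [Set.mem_setOf_eq, card_of_adjacentSets hadj] using hS

/-- No autonomous family of the augmented prism contains a two-element set. -/
lemma plus_no_two (F : Set (Finset (Fin 6))) (hF : AutFamily prismGraphPlus F)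
    (S : Finset (Fin 6)) (hS : S ∈ F) (h2 : S.card = 2) : False := by
  obtain ⟨hd, hmv, hcl⟩ := hF
  have hS11 : ∀ T : Finset (Fin 6), T.card = 2 → Dominates prismGraphPlus T →
      (T = {0,2} ∨ T = {0,3} ∨ T = {0,4} ∨ T = {0,5} ∨ T = {1,3} ∨ T = {1,4} ∨
       T = {1,5} ∨ T = {2,3} ∨ T = {2,4} ∨ T = {2,5} ∨ T = {4,5}) := by decide
  have h45 : ({4,5} : Finset (Fin 6)) ∈ F := by
    rcases hS11 S h2 (hd S hS) with rfl|rfl|rfl|rfl|rfl|rfl|rfl|rfl|rfl|rfl|rfl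
    · exact hcl {2,4} (hcl {0,2} hS {2,4} (by decide) (by decide)) {4,5} (by decide) (by decide)
    · exact hcl {0,5} (hcl {0,3} hS {0,5} (by decide) (by decide)) {4,5} (by decide) (by decide)
    · exact hcl {2,4} (hcl {0,4} hS {2,4} (by decide) (by decide)) {4,5} (by decide) (by decide)
    · exact hcl {0,5} hS {4,5} (by decide) (by decide)
    · exact hcl {1,5} (hcl {1,3} hS {1,5} (by decide) (by decide)) {4,5} (by decide) (by decide)
    · exact hcl {2,4} (hcl {1,4} hS {2,4} (by decide) (by decide)) {4,5} (by decide) (by decide)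
    · exact hcl {1,5} hS {4,5} (by decide) (by decide)
    · exact hcl {2,4} (hcl {2,3} hS {2,4} (by decide) (by decide)) {4,5} (by decide) (by decide)
    · exact hcl {2,4} hS {4,5} (by decide) (by decide)
    · exact hcl {2,4} (hcl {2,5} hS {2,4} (by decide) (by decide)) {4,5} (by decide) (by decide)
    · exact hS
  obtain ⟨S', hS'F, hadj, h3⟩ := hmv {4,5} h45 3 (by decide)
  have hdomS' : Dominates prismGraphPlus S' := hd S' hS'F
  have dead : ∀ T : Finset (Fin 6), AdjacentSets prismGraphPlus {4,5} T →
      (3 : Fin 6) ∈ T → ¬ Dominates prismGraphPlus T := by decide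
  exact dead S' hadj h3 hdomS'

lemma prism_autDomNum : autDomNum prismGraph = 2 := by
  have mem2 : 2 ∈ {k | ∃ S : Finset (Fin 6), AutDomSet prismGraph S ∧ S.card = k} := by
    refine ⟨{0,3}, ⟨↑prismFam, prismFam_autFamily, ?_⟩, by decide⟩
    simp only [Finset.coe_insert, Finset.mem_coe, prismFam]
    decide
  have lb : ∀ k ∈ {k | ∃ S : Finset (Fin 6), AutDomSet prismGraph S ∧ S.card = k}, 2 ≤ k := by
    rintro k ⟨S, ⟨F, hF, hSF⟩, rfl⟩
    have hdom : Dominates prismGraph S := hF.1 S hSF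
    have h : ∀ T : Finset (Fin 6), Dominates prismGraph T → 2 ≤ T.card := by decide
    exact h S hdom
  exact le_antisymm (Nat.sInf_le mem2) (le_csInf ⟨2, mem2⟩ lb)

lemma plus_autDomNum : autDomNum prismGraphPlus = 3 := by
  have mem3 : 3 ∈ {k | ∃ S : Finset (Fin 6), AutDomSet prismGraphPlus S ∧ S.card = k} := by
    exact ⟨{0,1,3}, ⟨{S : Finset (Fin 6) | S.card = 3}, plusFam_autFamily, show ({0,1,3} : Finset (Fin 6)).card = 3 by decide⟩, by decide⟩
  have lb : ∀ k ∈ {k | ∃ S : Finset (Fin 6), AutDomSet prismGraphPlus S ∧ S.card = k},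
      3 ≤ k := by
    rintro k ⟨S, ⟨F, hF, hSF⟩, rfl⟩
    have hdom : Dominates prismGraphPlus S := hF.1 S hSF
    have h2 : ∀ T : Finset (Fin 6), Dominates prismGraphPlus T → 2 ≤ T.card := by decide
    by_contra hlt
    have hc := h2 S hdom
    exact plus_no_two F hF S hSF (by omega)
  exact le_antisymm (Nat.sInf_le mem3) (le_csInf ⟨3, mem3⟩ lb)

/-- adding an edge can strictly increase the autonomous domination
number: the prism has `γ_aut = 2`, but adding the diagonal edge `(a_1, b_2)` gives a
graph with `γ_aut = 3`. -/
theorem autDomNum_increases_with_edge_addition :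
    ¬ prismGraph.Adj 0 4 ∧ prismGraphPlus = prismGraph ⊔ SimpleGraph.fromEdgeSet {s(0, 4)} ∧
    autDomNum prismGraph = 2 ∧ autDomNum prismGraphPlus = 3 ∧
    autDomNum prismGraph < autDomNum prismGraphPlus := by
  refine ⟨by decide, ?_, prism_autDomNum, plus_autDomNum, ?_⟩
  · ext a b
    simp only [prismGraphPlus, prismGraph, SimpleGraph.fromRel_adj, sup_adj,
      fromEdgeSet_adj, Set.mem_singleton_iff, Sym2.eq, Sym2.rel_iff', Prod.mk.injEq,
      Prod.swap_prod_mk]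
    fin_cases a <;> fin_cases b <;> decide
  · rw [prism_autDomNum, plus_autDomNum]; omega
end
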